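/- arXiv:2605.29497 — 2 statements merged into one kernel-verified Lean document; each statement's English description precedes it below -/
import Mathlib

section
/- Consider the Gaussian single-index model with, in addition, E[ζ⁴ | X] = K₄⁴, and suppose E[f(X^⊤β*)⁸] < ∞. Then for every v ∈ ℝ^d, E[⟨Y·X, v⟩⁴] ≤ (88 · (E[f(X^⊤β*)⁸])^{1/2} + 24 · K₄⁴) · ‖v‖₂⁴. -/
/-!
Write `W = ⟪X, v⟫`, a centred Gaussian of variance `‖v‖²`. Since `⟪Y • X, v⟫ = (f ⟪X, β*⟫ + ζ) W`
and `(a + b)⁴ ≤ 8a⁴ + 8b⁴`, the fourth moment is at most `8 E[f⁴W⁴] + 8 E[ζ⁴W⁴]`.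
By Cauchy–Schwarz and `E[W⁸] = 105 ‖v‖⁸` the first term is at most `8 √105 √E[f⁸] ‖v‖⁴`, and
`√105 < 11`. Since `W` is `σ(X)`-measurable, conditioning on `X` turns the second term into
`8 K₄⁴ E[W⁴] = 24 K₄⁴ ‖v‖⁴`. The even Gaussian moments `E[Z^(2k)] = (2k - 1)‼` are Gamma integrals.
-/

open MeasureTheory ProbabilityTheory
open scoped RealInnerProductSpace

/-- The standard Gaussian measure `N(0, I_d)` on `ℝ^d`. -/
noncomputable def stdGaussian (d : ℕ) : Measure (EuclideanSpace ℝ (Fin d)) :=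
  (Measure.pi fun _ : Fin d => gaussianReal 0 1).map
    (MeasurableEquiv.toLp 2 (Fin d → ℝ))

open Real
open scoped NNReal ENNReal Nat

lemma stdGaussian_eq_stdGaussian_euclideanSpace (d : ℕ) :
    _root_.stdGaussian d = ProbabilityTheory.stdGaussian (EuclideanSpace ℝ (Fin d)) :=
  map_pi_eq_stdGaussian

lemma integrable_pow_gaussianReal (m : ℝ) (v : ℝ≥0) (n : ℕ) :
    Integrable (fun x => x ^ n) (gaussianReal m v) :=
  (integrable_norm_iff (by fun_prop)).1 <| by
    simpa [norm_pow] using (memLp_id_gaussianReal (μ := m) (v := v) n).integrable_norm_pow'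

lemma integral_pow_two_mul_gaussianReal_zero_one (k : ℕ) :
    ∫ x, x ^ (2 * k) ∂gaussianReal 0 1 = (2 * k - 1 : ℕ)‼ := by
  set F : ℝ → ℝ := fun x => x ^ ((2 * k : ℕ) : ℝ) * exp (-(1 / 2) * x ^ (2 : ℝ))
  have hF : ∫ x in Set.Ioi (0 : ℝ), F x
      = 2 ^ k * √2 * (1 / 2) * ((2 * k - 1 : ℕ)‼ * √π / 2 ^ k) := by
    have hexp : (((2 * k : ℕ) : ℝ) + 1) / 2 = k + 1 / 2 := by push_cast; ring
    have hb : (1 / 2 : ℝ) ^ (-(((2 * k : ℕ) : ℝ) + 1) / 2) = 2 ^ k * √2 := by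
      rw [neg_div, hexp, rpow_neg (by norm_num), div_rpow (by norm_num) (by norm_num), one_rpow,
        one_div, inv_inv, rpow_add two_pos, rpow_natCast, sqrt_eq_rpow]
    rw [integral_rpow_mul_exp_neg_mul_rpow two_pos (by linarith [(2 * k : ℕ).cast_nonneg (α := ℝ)])
      (by norm_num), hb, hexp, Gamma_nat_add_half]
  calc ∫ x, x ^ (2 * k) ∂gaussianReal 0 1 = ∫ x, (√(2 * π))⁻¹ * F |x| := by
        rw [integral_gaussianReal_eq_integral_smul one_ne_zero]
        congr 1 with x
        dsimp only [F]
        rw [rpow_natCast, rpow_two, sq_abs, pow_mul, pow_mul, sq_abs]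
        simp only [gaussianPDFReal, NNReal.coe_one, mul_one, sub_zero, smul_eq_mul]
        ring_nf
    _ = 2 * (√(2 * π))⁻¹ * ∫ x in Set.Ioi (0 : ℝ), F x := by
        rw [integral_comp_abs (f := fun x => (√(2 * π))⁻¹ * F x), integral_const_mul]
        ring
    _ = (2 * k - 1 : ℕ)‼ := by
        rw [hF, sqrt_mul zero_le_two]
        field_simp

lemma integral_pow_two_mul_gaussianReal (σ : ℝ≥0) (k : ℕ) :
    ∫ x, x ^ (2 * k) ∂gaussianReal 0 (σ ^ 2) = σ ^ (2 * k) * (2 * k - 1 : ℕ)‼ := by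
  have hmap : (gaussianReal 0 1).map ((σ : ℝ) * ·) = gaussianReal 0 (σ ^ 2) := by
    rw [gaussianReal_map_const_mul, mul_zero, mul_one]
    congr
  rw [← hmap, integral_map (by fun_prop) (by fun_prop)]
  simp_rw [mul_pow]
  rw [integral_const_mul, integral_pow_two_mul_gaussianReal_zero_one]

lemma integral_mul_le_sqrt_mul_sqrt {α : Type*} [MeasurableSpace α] {μ : Measure α}
    {f g : α → ℝ} (hf : MemLp f 2 μ) (hg : MemLp g 2 μ) :
    ∫ a, f a * g a ∂μ ≤ √(∫ a, f a ^ 2 ∂μ) * √(∫ a, g a ^ 2 ∂μ) := by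
  have hL2 {u : α → ℝ} (hu : MemLp u 2 μ) : MemLp (fun a => |u a|) (ENNReal.ofReal 2) μ := by
    rw [ENNReal.ofReal_ofNat]
    exact hu.abs
  have hsqrt (u : α → ℝ) : (∫ a, |u a| ^ (2 : ℝ) ∂μ) ^ (1 / 2 : ℝ) = √(∫ a, u a ^ 2 ∂μ) := by
    simp_rw [rpow_two, sq_abs, sqrt_eq_rpow]
  calc ∫ a, f a * g a ∂μ ≤ ∫ a, |f a| * |g a| ∂μ :=
        integral_mono (hf.integrable_mul hg) (hf.abs.integrable_mul hg.abs) fun a => by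
          rw [← abs_mul]; exact le_abs_self _
    _ ≤ √(∫ a, f a ^ 2 ∂μ) * √(∫ a, g a ^ 2 ∂μ) := by
        rw [← hsqrt f, ← hsqrt g]
        exact integral_mul_le_Lp_mul_Lq_of_nonneg HolderConjugate.two_two
          (.of_forall fun a => abs_nonneg (f a)) (.of_forall fun a => abs_nonneg (g a))
          (hL2 hf) (hL2 hg)

section CondExp

variable {Ω : Type*} {m : MeasurableSpace Ω} [mΩ : MeasurableSpace Ω] {μ : Measure Ω}
  [IsFiniteMeasure μ] {g h : Ω → ℝ} {c : ℝ}

lemma lintegral_ofReal_mul_of_condExp_ae_eq_const (hm : m ≤ mΩ) (hg : Measurable[m] g)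
    (hg0 : 0 ≤ g) (hh0 : 0 ≤ᵐ[μ] h) (hh : Integrable h μ) (hc : μ[h | m] =ᵐ[μ] fun _ => c) :
    ∫⁻ ω, ENNReal.ofReal (g ω * h ω) ∂μ = ENNReal.ofReal c * ∫⁻ ω, ENNReal.ofReal (g ω) ∂μ := by
  -- `h · μ` and `c · μ` agree on `m`, hence integrate `m`-measurable functions alike.
  have htrim : (μ.withDensity fun ω => ENNReal.ofReal (h ω)).trim hm
      = (ENNReal.ofReal c • μ).trim hm := by
    refine @Measure.ext _ m _ _ fun s hs => ?_
    rw [trim_measurableSet_eq hm hs, trim_measurableSet_eq hm hs, withDensity_apply _ (hm s hs),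
      ← ofReal_integral_eq_lintegral_ofReal hh.integrableOn (ae_restrict_of_ae hh0),
      ← setIntegral_condExp hm hh hs, setIntegral_congr_ae (hm s hs) (hc.mono fun _ hω _ => hω),
      setIntegral_const, smul_eq_mul, Measure.smul_apply, smul_eq_mul, mul_comm,
      ENNReal.ofReal_mul' measureReal_nonneg, ofReal_measureReal]
  have hg' : Measurable[m] fun ω => ENNReal.ofReal (g ω) := hg.ennreal_ofReal
  calc ∫⁻ ω, ENNReal.ofReal (g ω * h ω) ∂μ
      = ∫⁻ ω, ENNReal.ofReal (g ω) ∂(μ.withDensity fun ω => ENNReal.ofReal (h ω)) := by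
        rw [lintegral_withDensity_eq_lintegral_mul₀ hh.aemeasurable.ennreal_ofReal
          (hg'.mono hm le_rfl).aemeasurable]
        simp only [Pi.mul_apply, ENNReal.ofReal_mul (hg0 _), mul_comm]
    _ = ∫⁻ ω, ENNReal.ofReal (g ω) ∂(ENNReal.ofReal c • μ) := by
        rw [← lintegral_trim hm hg', htrim, lintegral_trim hm hg']
    _ = ENNReal.ofReal c * ∫⁻ ω, ENNReal.ofReal (g ω) ∂μ := lintegral_smul_measure _ _

lemma integrable_mul_of_condExp_ae_eq_const (hm : m ≤ mΩ) (hg : Measurable[m] g)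
    (hg0 : 0 ≤ g) (hgi : Integrable g μ) (hh0 : 0 ≤ᵐ[μ] h) (hh : Integrable h μ)
    (hc : μ[h | m] =ᵐ[μ] fun _ => c) :
    Integrable (fun ω => g ω * h ω) μ := by
  refine ⟨(hg.mono hm le_rfl).aestronglyMeasurable.mul hh.aestronglyMeasurable, ?_⟩
  rw [hasFiniteIntegral_iff_ofReal (hh0.mono fun ω hω => mul_nonneg (hg0 ω) hω),
    lintegral_ofReal_mul_of_condExp_ae_eq_const hm hg hg0 hh0 hh hc]
  exact ENNReal.mul_lt_top ENNReal.ofReal_lt_top hgi.lintegral_lt_top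

lemma integral_mul_of_condExp_ae_eq_const (hm : m ≤ mΩ) (hg : Measurable[m] g)
    (hg0 : 0 ≤ g) (hgi : Integrable g μ) (hh0 : 0 ≤ᵐ[μ] h) (hh : Integrable h μ) (hc0 : 0 ≤ c)
    (hc : μ[h | m] =ᵐ[μ] fun _ => c) :
    ∫ ω, g ω * h ω ∂μ = c * ∫ ω, g ω ∂μ := by
  rw [integral_eq_lintegral_of_nonneg_ae (hh0.mono fun ω hω => mul_nonneg (hg0 ω) hω)
      (integrable_mul_of_condExp_ae_eq_const hm hg hg0 hgi hh0 hh hc).aestronglyMeasurable,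
    lintegral_ofReal_mul_of_condExp_ae_eq_const hm hg hg0 hh0 hh hc, ENNReal.toReal_mul,
    ENNReal.toReal_ofReal hc0, ← integral_eq_lintegral_of_nonneg_ae (.of_forall hg0)
      hgi.aestronglyMeasurable]

end CondExp

section StdGaussian

variable {E : Type*} [NormedAddCommGroup E] [InnerProductSpace ℝ E] [FiniteDimensional ℝ E]
  [MeasurableSpace E] [BorelSpace E]

lemma map_inner_stdGaussian (v : E) :
    (ProbabilityTheory.stdGaussian E).map (fun x => ⟪x, v⟫) = gaussianReal 0 (‖v‖₊ ^ 2) := by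
  have h := IsGaussian.map_eq_gaussianReal (μ := ProbabilityTheory.stdGaussian E) (innerSL ℝ v)
  rw [integral_strongDual_stdGaussian, variance_dual_stdGaussian, innerSL_apply_norm] at h
  convert h using 2
  · ext x; simp [real_inner_comm]
  · ext; simp

lemma measurable_comap_inner_pow {Ω : Type*} (X : Ω → E) (v : E) (n : ℕ) :
    Measurable[MeasurableSpace.comap X inferInstance] fun ω => ⟪X ω, v⟫ ^ n :=
  (by fun_prop : Measurable fun x : E => ⟪x, v⟫ ^ n).comp (comap_measurable X)

variable {Ω : Type*} [MeasurableSpace Ω] {μ : Measure Ω} {X : Ω → E}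

lemma map_inner_of_map_eq_stdGaussian (hX : AEMeasurable X μ)
    (hlaw : μ.map X = ProbabilityTheory.stdGaussian E) (v : E) :
    μ.map (fun ω => ⟪X ω, v⟫) = gaussianReal 0 (‖v‖₊ ^ 2) := by
  rw [← map_inner_stdGaussian, ← hlaw, AEMeasurable.map_map_of_aemeasurable (by fun_prop) hX]
  rfl

lemma integrable_inner_pow_of_map_eq_stdGaussian (hX : AEMeasurable X μ)
    (hlaw : μ.map X = ProbabilityTheory.stdGaussian E) (v : E) (n : ℕ) :
    Integrable (fun ω => ⟪X ω, v⟫ ^ n) μ := by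
  have h := integrable_pow_gaussianReal 0 (‖v‖₊ ^ 2) n
  rw [← map_inner_of_map_eq_stdGaussian hX hlaw v] at h
  exact h.comp_aemeasurable (by fun_prop)

lemma integral_inner_pow_two_mul_of_map_eq_stdGaussian (hX : AEMeasurable X μ)
    (hlaw : μ.map X = ProbabilityTheory.stdGaussian E) (v : E) (k : ℕ) :
    ∫ ω, ⟪X ω, v⟫ ^ (2 * k) ∂μ = ‖v‖ ^ (2 * k) * (2 * k - 1 : ℕ)‼ := by
  rw [← integral_map (f := fun x : ℝ => x ^ (2 * k)) (by fun_prop) (by fun_prop),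
    map_inner_of_map_eq_stdGaussian hX hlaw, integral_pow_two_mul_gaussianReal]
  rfl

lemma memLp_two_inner_pow_of_map_eq_stdGaussian (hX : AEMeasurable X μ)
    (hlaw : μ.map X = ProbabilityTheory.stdGaussian E) (v : E) (n : ℕ) :
    MemLp (fun ω => ⟪X ω, v⟫ ^ n) 2 μ :=
  (memLp_two_iff_integrable_sq (by fun_prop)).2 <| by
    simpa only [← pow_mul] using integrable_inner_pow_of_map_eq_stdGaussian hX hlaw v (n * 2)

lemma integral_mul_inner_pow_four_le_of_map_eq_stdGaussian (hX : AEMeasurable X μ)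
    (hlaw : μ.map X = ProbabilityTheory.stdGaussian E) {U : Ω → ℝ} (hU : MemLp U 2 μ) (v : E) :
    ∫ ω, U ω * ⟪X ω, v⟫ ^ 4 ∂μ ≤ 11 * √(∫ ω, U ω ^ 2 ∂μ) * ‖v‖ ^ 4 := by
  have hW8 : ∫ ω, (⟪X ω, v⟫ ^ 4) ^ 2 ∂μ = ‖v‖ ^ 8 * 105 := by
    simpa [← pow_mul, Nat.doubleFactorial] using
      integral_inner_pow_two_mul_of_map_eq_stdGaussian hX hlaw v 4
  have hsqrt : √(‖v‖ ^ 8 * 105) ≤ 11 * ‖v‖ ^ 4 := by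
    rw [sqrt_le_left (by positivity)]
    nlinarith [pow_nonneg (norm_nonneg v) 8]
  calc ∫ ω, U ω * ⟪X ω, v⟫ ^ 4 ∂μ
      ≤ √(∫ ω, U ω ^ 2 ∂μ) * √(∫ ω, (⟪X ω, v⟫ ^ 4) ^ 2 ∂μ) :=
        integral_mul_le_sqrt_mul_sqrt hU (memLp_two_inner_pow_of_map_eq_stdGaussian hX hlaw v 4)
    _ ≤ 11 * √(∫ ω, U ω ^ 2 ∂μ) * ‖v‖ ^ 4 := by
        rw [hW8]
        grw [hsqrt]
        exact le_of_eq (by ring)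

variable [IsFiniteMeasure μ] {h : Ω → ℝ} {c : ℝ}

lemma integrable_inner_pow_four_mul_of_condExp_ae_eq_const (hX : Measurable X)
    (hlaw : μ.map X = ProbabilityTheory.stdGaussian E) (hh0 : 0 ≤ᵐ[μ] h) (hh : Integrable h μ)
    (hc : μ[h | MeasurableSpace.comap X inferInstance] =ᵐ[μ] fun _ => c) (v : E) :
    Integrable (fun ω => ⟪X ω, v⟫ ^ 4 * h ω) μ :=
  integrable_mul_of_condExp_ae_eq_const hX.comap_le (measurable_comap_inner_pow X v 4)
    (fun ω => by positivity) (integrable_inner_pow_of_map_eq_stdGaussian hX.aemeasurable hlaw v 4)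
    hh0 hh hc

lemma integral_inner_pow_four_mul_of_condExp_ae_eq_const (hX : Measurable X)
    (hlaw : μ.map X = ProbabilityTheory.stdGaussian E) (hh0 : 0 ≤ᵐ[μ] h) (hh : Integrable h μ)
    (hc0 : 0 ≤ c) (hc : μ[h | MeasurableSpace.comap X inferInstance] =ᵐ[μ] fun _ => c) (v : E) :
    ∫ ω, ⟪X ω, v⟫ ^ 4 * h ω ∂μ = 3 * c * ‖v‖ ^ 4 := by
  have hW4 : ∫ ω, ⟪X ω, v⟫ ^ 4 ∂μ = ‖v‖ ^ 4 * 3 := by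
    simpa [Nat.doubleFactorial] using
      integral_inner_pow_two_mul_of_map_eq_stdGaussian hX.aemeasurable hlaw v 2
  rw [integral_mul_of_condExp_ae_eq_const hX.comap_le (measurable_comap_inner_pow X v 4)
    (fun ω => by positivity) (integrable_inner_pow_of_map_eq_stdGaussian hX.aemeasurable hlaw v 4)
    hh0 hh hc0 hc, hW4]
  ring

end StdGaussian

lemma add_pow_four_le (a b : ℝ) : (a + b) ^ 4 ≤ 8 * a ^ 4 + 8 * b ^ 4 := by
  nlinarith [sq_nonneg (a - b), sq_nonneg (a + b), sq_nonneg (a ^ 2 - b ^ 2)]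

theorem fourth_moment_bound_general
    {Ω : Type*} [MeasurableSpace Ω] (μ : Measure Ω) [IsProbabilityMeasure μ]
    {d : ℕ} (X : Ω → EuclideanSpace ℝ (Fin d)) (ζ : Ω → ℝ) (Y : Ω → ℝ)
    (βs : EuclideanSpace ℝ (Fin d)) (f : ℝ → ℝ) (K₄ : ℝ)
    (hX : Measurable X) (hf : Measurable f)
    (hXlaw : μ.map X = stdGaussian d)
    (hY : ∀ ω, Y ω = f ⟪X ω, βs⟫ + ζ ω)
    (hζ4int : Integrable (fun ω => ζ ω ^ 4) μ)
    (hζ4 : μ[fun ω => ζ ω ^ 4 | MeasurableSpace.comap X inferInstance] =ᵐ[μ] fun _ => K₄ ^ 4)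
    (hf8 : Integrable (fun ω => f ⟪X ω, βs⟫ ^ 8) μ) :
    ∀ v : EuclideanSpace ℝ (Fin d),
      ∫ ω, ⟪Y ω • X ω, v⟫ ^ 4 ∂μ
        ≤ (88 * Real.sqrt (∫ ω, f ⟪X ω, βs⟫ ^ 8 ∂μ) + 24 * K₄ ^ 4) * ‖v‖ ^ 4 := by
  intro v
  rw [stdGaussian_eq_stdGaussian_euclideanSpace] at hXlaw
  set W : Ω → ℝ := fun ω => ⟪X ω, v⟫
  set U : Ω → ℝ := fun ω => f ⟪X ω, βs⟫
  have hU4 : MemLp (fun ω => U ω ^ 4) 2 μ :=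
    (memLp_two_iff_integrable_sq (by fun_prop)).2 (by simpa only [← pow_mul] using hf8)
  have hζ4nonneg : 0 ≤ᵐ[μ] fun ω => ζ ω ^ 4 := .of_forall fun ω => by positivity
  have hsignal_int : Integrable (fun ω => U ω ^ 4 * W ω ^ 4) μ :=
    hU4.integrable_mul (memLp_two_inner_pow_of_map_eq_stdGaussian hX.aemeasurable hXlaw v 4)
  have hnoise_int : Integrable (fun ω => W ω ^ 4 * ζ ω ^ 4) μ :=
    integrable_inner_pow_four_mul_of_condExp_ae_eq_const hX hXlaw hζ4nonneg hζ4int hζ4 v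
  have hsignal : ∫ ω, U ω ^ 4 * W ω ^ 4 ∂μ ≤ 11 * √(∫ ω, U ω ^ 8 ∂μ) * ‖v‖ ^ 4 := by
    simpa only [← pow_mul] using
      integral_mul_inner_pow_four_le_of_map_eq_stdGaussian hX.aemeasurable hXlaw hU4 v
  have hnoise : ∫ ω, W ω ^ 4 * ζ ω ^ 4 ∂μ = 3 * K₄ ^ 4 * ‖v‖ ^ 4 :=
    integral_inner_pow_four_mul_of_condExp_ae_eq_const hX hXlaw hζ4nonneg hζ4int (by positivity)
      hζ4 v
  have hpoint (ω : Ω) :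
      ⟪Y ω • X ω, v⟫ ^ 4 ≤ 8 * (U ω ^ 4 * W ω ^ 4) + 8 * (W ω ^ 4 * ζ ω ^ 4) := by
    rw [real_inner_smul_left, hY, mul_pow]
    grw [add_pow_four_le]
    exact le_of_eq (by ring)
  calc ∫ ω, ⟪Y ω • X ω, v⟫ ^ 4 ∂μ
      ≤ ∫ ω, 8 * (U ω ^ 4 * W ω ^ 4) + 8 * (W ω ^ 4 * ζ ω ^ 4) ∂μ :=
        integral_mono_of_nonneg (.of_forall fun ω => by positivity)
          ((hsignal_int.const_mul 8).add (hnoise_int.const_mul 8)) (.of_forall hpoint)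
    _ = 8 * ∫ ω, U ω ^ 4 * W ω ^ 4 ∂μ + 8 * ∫ ω, W ω ^ 4 * ζ ω ^ 4 ∂μ := by
        rw [integral_add (hsignal_int.const_mul 8) (hnoise_int.const_mul 8),
          integral_const_mul, integral_const_mul]
    _ ≤ (88 * √(∫ ω, U ω ^ 8 ∂μ) + 24 * K₄ ^ 4) * ‖v‖ ^ 4 := by
        rw [hnoise]
        grw [hsignal]
        exact le_of_eq (by ring)

/-- **Fourth-moment upper bound for `Ỹ = Y·X`**: for every `v`,
`E[⟨Y·X, v⟩⁴] ≤ (88 (E[f(Xᵀβ*)⁸])^{1/2} + 24 K₄⁴) ‖v‖⁴`. -/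
theorem fourth_moment_bound
    {Ω : Type*} [MeasurableSpace Ω] (μ : Measure Ω) [IsProbabilityMeasure μ]
    {d : ℕ} (X : Ω → EuclideanSpace ℝ (Fin d)) (ζ : Ω → ℝ) (Y : Ω → ℝ)
    (βs : EuclideanSpace ℝ (Fin d)) (f : ℝ → ℝ) (σ K₄ : ℝ)
    (hX : Measurable X) (hζ : Measurable ζ) (hf : Measurable f)
    (hXlaw : μ.map X = stdGaussian d) (hβ : ‖βs‖ = 1)
    (hY : ∀ ω, Y ω = f ⟪X ω, βs⟫ + ζ ω)
    (hζint : Integrable ζ μ) (hζsq : Integrable (fun ω => ζ ω ^ 2) μ)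
    (hζ4int : Integrable (fun ω => ζ ω ^ 4) μ)
    (hζm : μ[ζ | MeasurableSpace.comap X inferInstance] =ᵐ[μ] 0)
    (hζv : μ[fun ω => ζ ω ^ 2 | MeasurableSpace.comap X inferInstance] =ᵐ[μ] fun _ => σ ^ 2)
    (hζ4 : μ[fun ω => ζ ω ^ 4 | MeasurableSpace.comap X inferInstance] =ᵐ[μ] fun _ => K₄ ^ 4)
    (hK₄ : 0 ≤ K₄)
    (hf8 : Integrable (fun ω => f ⟪X ω, βs⟫ ^ 8) μ) :
    ∀ v : EuclideanSpace ℝ (Fin d),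
      ∫ ω, ⟪Y ω • X ω, v⟫ ^ 4 ∂μ
        ≤ (88 * Real.sqrt (∫ ω, f ⟪X ω, βs⟫ ^ 8 ∂μ) + 24 * K₄ ^ 4) * ‖v‖ ^ 4 :=
  fourth_moment_bound_general μ X ζ Y βs f K₄ hX hf hXlaw hY hζ4int hζ4 hf8
end

section
/- Let r : ℝ^d → ℝ be twice continuously differentiable on the closed ball B(β*, R) with γ · I_d ⪯ ∇²r(β) ⪯ α · I_d for all β ∈ B(β*, R), where 0 < γ ≤ α, and suppose ∇r(β*) = 0. Let β ∈ B(β*, R), let 0 < η ≤ 2/(α + γ), and let g ∈ ℝ^d satisfy ‖g − ∇r(β)‖₂ ≤ A · ‖β − β*‖₂ + B for some A, B ≥ 0. Then ‖(β − η g) − β*‖₂ ≤ (√(1 − 2ηαγ/(α + γ)) + η A) · ‖β − β*‖₂ + η B. -/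
/-!
Write `c = (α + γ)/2` and `ρ = (α - γ)/2`. On the ball the Hessian of `r` is a symmetric operator
with spectrum in `[γ, α]`, so `∇²r - c` has operator norm at most `ρ`; the mean value inequality
applied to `∇r - c · id` gives `‖∇r(β) - c (β - β*)‖ ≤ ρ ‖β - β*‖`. Hence the exact gradient step
contracts by `|1 - ηc| + ηρ = 1 - ηγ`, which is at most `√(1 - 2ηαγ/(α + γ))` for
`η ≤ 2/(α + γ)`, and the error `g - ∇r(β)` costs at most `η (A ‖β - β*‖ + B)`.
-/

open Metric InnerProductSpace

theorem ContinuousLinearMap.norm_le_of_abs_re_inner_self_le {𝕜 E : Type*} [RCLike 𝕜] [NormedAddCommGroup E]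
    [InnerProductSpace 𝕜 E] {T : E →L[𝕜] E} (hT : (T : E →ₗ[𝕜] E).IsSymmetric) {ρ : ℝ}
    (hρ : 0 ≤ ρ) (h : ∀ x, |RCLike.re (inner 𝕜 (T x) x)| ≤ ρ * ‖x‖ ^ 2) : ‖T‖ ≤ ρ := by
  rw [T.norm_eq_iSup_rayleighQuotient hT]
  refine ciSup_le fun x => ?_
  rcases eq_or_ne x 0 with rfl | hx
  · simpa using hρ
  rw [rayleighQuotient, reApplyInnerSelf_apply, abs_div, abs_sq, div_le_iff₀ (by positivity)]
  exact h x

variable {E : Type*} [NormedAddCommGroup E] [InnerProductSpace ℝ E]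

theorem ContinuousLinearMap.norm_sub_smul_id_le_of_inner_self_mem_Icc {T : E →L[ℝ] E}
    (hT : (T : E →ₗ[ℝ] E).IsSymmetric) {γ α : ℝ} (hγα : γ ≤ α)
    (h : ∀ v, γ * ‖v‖ ^ 2 ≤ inner ℝ (T v) v ∧ inner ℝ (T v) v ≤ α * ‖v‖ ^ 2) :
    ‖T - ((α + γ) / 2) • ContinuousLinearMap.id ℝ E‖ ≤ (α - γ) / 2 := by
  refine norm_le_of_abs_re_inner_self_le ?_ (by linarith) fun v => ?_
  · simpa using hT.sub (LinearMap.IsSymmetric.id.smul (conj_trivial ((α + γ) / 2)))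
  · have hv : inner ℝ ((T - ((α + γ) / 2) • ContinuousLinearMap.id ℝ E) v) v
        = inner ℝ (T v) v - (α + γ) / 2 * ‖v‖ ^ 2 := by
      simp [inner_sub_left, real_inner_smul_left]
    rw [RCLike.re_to_real, hv, abs_le]
    constructor <;> linarith [h v]

theorem fderiv_fderiv_apply {F : Type*} [NormedAddCommGroup F] [NormedSpace ℝ F]
    {r : E → F} {x : E} (h : DifferentiableAt ℝ (fderiv ℝ r) x) (v w : E) :
    fderiv ℝ (fun y => fderiv ℝ r y v) x w = fderiv ℝ (fderiv ℝ r) x w v := by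
  simp [fderiv_clm_apply h (differentiableAt_const v)]

variable [CompleteSpace E]

theorem hasFDerivAt_gradient {r : E → ℝ} {x : E} (h : DifferentiableAt ℝ (fderiv ℝ r) x) :
    HasFDerivAt (gradient r)
      (((toDual ℝ E).symm.toLinearIsometry.toContinuousLinearMap : (E →L[ℝ] ℝ) →L[ℝ] E) ∘L
        fderiv ℝ (fderiv ℝ r) x) x :=
  (toDual ℝ E).symm.toLinearIsometry.toContinuousLinearMap.hasFDerivAt.comp x h.hasFDerivAt

theorem inner_fderiv_gradient_apply {r : E → ℝ} {x : E} (h : DifferentiableAt ℝ (fderiv ℝ r) x)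
    (v w : E) : inner ℝ (fderiv ℝ (gradient r) x v) w = fderiv ℝ (fderiv ℝ r) x v w :=
  (hasFDerivAt_gradient h).fderiv ▸ toDual_symm_apply

theorem isSymmetric_fderiv_gradient {r : E → ℝ} {x : E} (hr : ContDiffAt ℝ 2 r x) :
    (fderiv ℝ (gradient r) x : E →ₗ[ℝ] E).IsSymmetric := by
  have h : DifferentiableAt ℝ (fderiv ℝ r) x :=
    (hr.fderiv_right (m := 1) le_rfl).differentiableAt one_ne_zero
  intro v w
  rw [ContinuousLinearMap.coe_coe, ← real_inner_comm v, inner_fderiv_gradient_apply h,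
    inner_fderiv_gradient_apply h]
  exact (hr.isSymmSndFDerivAt (by simp)).eq v w

theorem norm_gradient_sub_gradient_sub_smul_le {r : E → ℝ} (hr : ContDiff ℝ 2 r) {s : Set E}
    (hs : Convex ℝ s) {γ α : ℝ} (hγα : γ ≤ α)
    (hHess : ∀ y ∈ s, ∀ v, γ * ‖v‖ ^ 2 ≤ fderiv ℝ (fderiv ℝ r) y v v ∧
      fderiv ℝ (fderiv ℝ r) y v v ≤ α * ‖v‖ ^ 2)
    {x y : E} (hx : x ∈ s) (hy : y ∈ s) :
    ‖gradient r x - gradient r y - ((α + γ) / 2) • (x - y)‖ ≤ (α - γ) / 2 * ‖x - y‖ := by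
  have hd : Differentiable ℝ (fderiv ℝ r) :=
    (hr.fderiv_right (m := 1) le_rfl).differentiable one_ne_zero
  have hderiv : ∀ z ∈ s, HasFDerivWithinAt (fun z => gradient r z - ((α + γ) / 2) • z)
      (fderiv ℝ (gradient r) z - ((α + γ) / 2) • ContinuousLinearMap.id ℝ E) s z := fun z _ =>
    ((hasFDerivAt_gradient (hd z)).differentiableAt.hasFDerivAt.sub
      ((hasFDerivAt_id z).const_smul _)).hasFDerivWithinAt
  have hbound : ∀ z ∈ s,
      ‖fderiv ℝ (gradient r) z - ((α + γ) / 2) • ContinuousLinearMap.id ℝ E‖ ≤ (α - γ) / 2 :=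
    fun z hz => ContinuousLinearMap.norm_sub_smul_id_le_of_inner_self_mem_Icc
      (isSymmetric_fderiv_gradient hr.contDiffAt) hγα fun v => by
        simpa only [inner_fderiv_gradient_apply (hd z)] using hHess z hz v
  convert hs.norm_image_sub_le_of_norm_hasFDerivWithin_le hderiv hbound hy hx using 2
  module

theorem norm_sub_smul_le_of_norm_sub_smul_le {F : Type*} [SeminormedAddCommGroup F]
    [NormedSpace ℝ F] {u w : F} {γ α η : ℝ}
    (h : ‖w - ((α + γ) / 2) • u‖ ≤ (α - γ) / 2 * ‖u‖) (hη0 : 0 ≤ η) (hη : η * (α + γ) ≤ 2) :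
    ‖u - η • w‖ ≤ (1 - η * γ) * ‖u‖ := by
  have hc : 0 ≤ 1 - η * ((α + γ) / 2) := by linarith
  calc ‖u - η • w‖ = ‖(1 - η * ((α + γ) / 2)) • u - η • (w - ((α + γ) / 2) • u)‖ := by
        congr 1; module
    _ ≤ (1 - η * ((α + γ) / 2)) * ‖u‖ + η * ((α - γ) / 2 * ‖u‖) := by
        refine (norm_sub_le _ _).trans ?_
        rw [norm_smul_of_nonneg hc, norm_smul_of_nonneg hη0]
        gcongr
    _ = (1 - η * γ) * ‖u‖ := by ring

theorem one_sub_mul_le_sqrt_one_sub {γ α η : ℝ} (hαγ : 0 < α + γ) (hη0 : 0 ≤ η)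
    (hη : η ≤ 2 / (α + γ)) : 1 - η * γ ≤ √(1 - 2 * η * α * γ / (α + γ)) := by
  refine Real.le_sqrt_of_sq_le ?_
  have hkey : 2 * η * α * γ / (α + γ) = 2 * η * γ - 2 * η * γ ^ 2 / (α + γ) := by
    field_simp; ring
  have hsq : (η * γ) ^ 2 ≤ 2 * η * γ ^ 2 / (α + γ) := by
    rw [le_div_iff₀ hαγ]
    nlinarith [mul_le_mul_of_nonneg_left ((le_div_iff₀ hαγ).1 hη) (by positivity : 0 ≤ η * γ ^ 2)]
  rw [hkey]
  nlinarith [hsq]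

theorem robust_gd_single_step_general
    {d : ℕ} (r : EuclideanSpace ℝ (Fin d) → ℝ)
    (βs β g : EuclideanSpace ℝ (Fin d)) (R γ α η A B : ℝ)
    (hr : ContDiff ℝ 2 r)
    (hγ : 0 < γ) (hγα : γ ≤ α)
    (hHess : ∀ β' ∈ closedBall βs R, ∀ v : EuclideanSpace ℝ (Fin d),
      γ * ‖v‖ ^ 2 ≤ fderiv ℝ (fun y => fderiv ℝ r y v) β' v ∧
        fderiv ℝ (fun y => fderiv ℝ r y v) β' v ≤ α * ‖v‖ ^ 2)
    (hgrad0 : gradient r βs = 0)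
    (hβ : β ∈ closedBall βs R)
    (hη0 : 0 < η) (hη : η ≤ 2 / (α + γ))
    (hg : ‖g - gradient r β‖ ≤ A * ‖β - βs‖ + B) :
    ‖(β - η • g) - βs‖
      ≤ (Real.sqrt (1 - 2 * η * α * γ / (α + γ)) + η * A) * ‖β - βs‖ + η * B := by
  have hαγ : 0 < α + γ := by linarith
  have hHess' : ∀ y ∈ closedBall βs R, ∀ v, γ * ‖v‖ ^ 2 ≤ fderiv ℝ (fderiv ℝ r) y v v ∧
      fderiv ℝ (fderiv ℝ r) y v v ≤ α * ‖v‖ ^ 2 := fun y hy v => by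
    simpa only [fderiv_fderiv_apply
      ((hr.fderiv_right (m := 1) le_rfl).differentiable one_ne_zero y)] using hHess y hy v
  have hexact : ‖(β - βs) - η • gradient r β‖ ≤ (1 - η * γ) * ‖β - βs‖ := by
    refine norm_sub_smul_le_of_norm_sub_smul_le ?_ hη0.le ((le_div_iff₀ hαγ).1 hη)
    simpa [hgrad0] using norm_gradient_sub_gradient_sub_smul_le hr (convex_closedBall βs R) hγα
      hHess' hβ (mem_closedBall_self (dist_nonneg.trans hβ))
  have hsqrt := one_sub_mul_le_sqrt_one_sub hαγ hη0.le hη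
  calc ‖(β - η • g) - βs‖
      = ‖((β - βs) - η • gradient r β) - η • (g - gradient r β)‖ := by congr 1; module
    _ ≤ (1 - η * γ) * ‖β - βs‖ + η * (A * ‖β - βs‖ + B) := by
        refine (norm_sub_le _ _).trans (add_le_add hexact ?_)
        rw [norm_smul_of_nonneg hη0.le]
        gcongr
    _ ≤ _ := by linarith [mul_le_mul_of_nonneg_right hsqrt (norm_nonneg (β - βs))]

/-- **Single-step robust gradient descent contraction (Lemma D.1).** -/
theorem robust_gd_single_step
    {d : ℕ} (r : EuclideanSpace ℝ (Fin d) → ℝ)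
    (βs β g : EuclideanSpace ℝ (Fin d)) (R γ α η A B : ℝ)
    (hr : ContDiff ℝ 2 r)
    (hγ : 0 < γ) (hγα : γ ≤ α)
    (hHess : ∀ β' ∈ closedBall βs R, ∀ v : EuclideanSpace ℝ (Fin d),
      γ * ‖v‖ ^ 2 ≤ fderiv ℝ (fun y => fderiv ℝ r y v) β' v ∧
        fderiv ℝ (fun y => fderiv ℝ r y v) β' v ≤ α * ‖v‖ ^ 2)
    (hgrad0 : gradient r βs = 0)
    (hβ : β ∈ closedBall βs R)
    (hη0 : 0 < η) (hη : η ≤ 2 / (α + γ))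
    (hA : 0 ≤ A) (hB : 0 ≤ B)
    (hg : ‖g - gradient r β‖ ≤ A * ‖β - βs‖ + B) :
    ‖(β - η • g) - βs‖
      ≤ (Real.sqrt (1 - 2 * η * α * γ / (α + γ)) + η * A) * ‖β - βs‖ + η * B :=
  robust_gd_single_step_general r βs β g R γ α η A B hr hγ hγα hHess hgrad0 hβ hη0 hη hg
end
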